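/- arXiv:2102.05779 — 2 statements merged into one kernel-verified Lean document; each statement's English description precedes it below -/
import Mathlib

section
/- Fix an integer p ≥ 5, set λ = 2cos(π/p), and let k be an odd positive integer. Define q(z) = (z² + (2/λ - λ)z - 1)^{-k} + (z² + (λ - 2/λ)z - 1)^{-k}. Then q satisfies the rational period function relations of weight 2k on the Hecke group G_p: for every z ∈ ℂ with Im z ≠ 0, q(z) + z^{-2k}·q(-1/z) = 0 and Σ_{j=0}^{p-1} (q |_{2k} U^j)(z) = 0. -/
/-!
Write `q = A + B`, with `A`, `B` the `(-k)`-th powers of the quadratics `z² ± (2/λ - λ)z - 1`,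
and let `C` be that of `z² - (λ + 2/λ)z + 1`. A quadratic `Q(z) = z² + bz - 1` satisfies
`z² Q(-1/z) = -Q(z)`, which for odd `k` is the `T`-relation. Under `U` one computes
`A ∣ U = C` and `C ∣ U = -B`, hence `q ∣ U^(j+1) = C ∣ U^j - C ∣ U^(j+2)`, and the sum over
`j < p` telescopes to `q + C + C ∣ U - C ∣ U^(p-1) - C ∣ U^p`. With `θ = π/p` one has
`sin θ • U^j = ((sin (j+1)θ, -sin jθ), (sin jθ, -sin (j-1)θ))`, so `U^p = -1` and the sum is
`q + C - B - A - C = 0`.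
-/

/-- The weight-`2k` slash operator: for a real 2×2 matrix `M = ((a,b),(c,d))`,
`(f ∣_{2k} M)(z) = (cz+d)^{-2k} · f((az+b)/(cz+d))`. -/
noncomputable def slash (k : ℕ) (M : Matrix (Fin 2) (Fin 2) ℝ)
    (f : ℂ → ℂ) (z : ℂ) : ℂ :=
  ((M 1 0 : ℂ) * z + (M 1 1 : ℂ)) ^ (-(2 * (k : ℤ))) *
    f (((M 0 0 : ℂ) * z + (M 0 1 : ℂ)) / ((M 1 0 : ℂ) * z + (M 1 1 : ℂ)))

open Set Real

noncomputable def moebiusNum (M : Matrix (Fin 2) (Fin 2) ℝ) (z : ℂ) : ℂ :=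
  (M 0 0 : ℂ) * z + (M 0 1 : ℂ)

noncomputable def moebiusDenom (M : Matrix (Fin 2) (Fin 2) ℝ) (z : ℂ) : ℂ :=
  (M 1 0 : ℂ) * z + (M 1 1 : ℂ)

noncomputable def moebius (M : Matrix (Fin 2) (Fin 2) ℝ) (z : ℂ) : ℂ :=
  moebiusNum M z / moebiusDenom M z

def offReal : Set ℂ := {z | z.im ≠ 0}

lemma ne_zero_of_mem_offReal {z : ℂ} (hz : z ∈ offReal) : z ≠ 0 := by
  rintro rfl
  exact hz Complex.zero_im

section Moebius

variable {M N : Matrix (Fin 2) (Fin 2) ℝ} {z : ℂ}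

lemma slash_apply (k : ℕ) (M : Matrix (Fin 2) (Fin 2) ℝ) (f : ℂ → ℂ) (z : ℂ) :
    slash k M f z = moebiusDenom M z ^ (-(2 * (k : ℤ))) * f (moebius M z) :=
  rfl

lemma moebiusDenom_ne_zero (hM : M.det ≠ 0) (hz : z ∈ offReal) : moebiusDenom M z ≠ 0 := by
  intro h
  have hc : M 1 0 = 0 := by
    simpa [moebiusDenom, show z.im ≠ 0 from hz] using congrArg Complex.im h
  have hd : M 1 1 = 0 := by
    simpa [moebiusDenom, hc] using congrArg Complex.re h
  simp [Matrix.det_fin_two, hc, hd] at hM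

lemma im_moebius (M : Matrix (Fin 2) (Fin 2) ℝ) (z : ℂ) :
    (moebius M z).im = M.det * z.im / Complex.normSq (moebiusDenom M z) := by
  rw [moebius, Complex.div_im, div_sub_div_same, Matrix.det_fin_two]
  congr 1
  simp [moebiusNum, moebiusDenom]
  ring

lemma moebius_mem_offReal (hM : M.det ≠ 0) (hz : z ∈ offReal) : moebius M z ∈ offReal := by
  have := Complex.normSq_pos.2 (moebiusDenom_ne_zero hM hz)
  simp only [offReal, mem_ofPred_eq, im_moebius] at hz ⊢
  positivity

lemma moebiusNum_mul (M N : Matrix (Fin 2) (Fin 2) ℝ) (hN : moebiusDenom N z ≠ 0) :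
    moebiusNum (M * N) z = moebiusNum M (moebius N z) * moebiusDenom N z := by
  simp only [moebius, moebiusNum, moebiusDenom, Matrix.mul_apply, Fin.sum_univ_two] at hN ⊢
  rw [add_mul, mul_assoc, div_mul_cancel₀ _ hN]
  push_cast
  ring

lemma moebiusDenom_mul (M N : Matrix (Fin 2) (Fin 2) ℝ) (hN : moebiusDenom N z ≠ 0) :
    moebiusDenom (M * N) z = moebiusDenom M (moebius N z) * moebiusDenom N z := by
  simp only [moebius, moebiusNum, moebiusDenom, Matrix.mul_apply, Fin.sum_univ_two] at hN ⊢
  rw [add_mul, mul_assoc, div_mul_cancel₀ _ hN]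
  push_cast
  ring

lemma moebius_mul (M N : Matrix (Fin 2) (Fin 2) ℝ) (hN : moebiusDenom N z ≠ 0) :
    moebius (M * N) z = moebius M (moebius N z) := by
  rw [moebius, moebiusNum_mul M N hN, moebiusDenom_mul M N hN, mul_div_mul_right _ _ hN]
  rfl

end Moebius

section Slash

variable {k : ℕ} {M N : Matrix (Fin 2) (Fin 2) ℝ} {f g : ℂ → ℂ}

lemma slash_add : slash k M (f + g) = slash k M f + slash k M g := by
  ext z
  simp only [slash_apply, Pi.add_apply, mul_add]

lemma slash_neg : slash k M (-f) = -slash k M f := by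
  ext z
  simp only [slash_apply, Pi.neg_apply, mul_neg]

lemma slash_sub : slash k M (f - g) = slash k M f - slash k M g := by
  rw [sub_eq_add_neg, slash_add, slash_neg, ← sub_eq_add_neg]

lemma slash_one : slash k 1 f = f := by
  ext z
  simp [slash_apply, moebius, moebiusNum, moebiusDenom]

lemma slash_neg_one : slash k (-1) f = f := by
  ext z
  have hden : moebiusDenom (-1) z = -1 := by simp [moebiusDenom]
  have hmoeb : moebius (-1) z = z := by simp [moebius, moebiusNum, hden]
  rw [slash_apply, hden, hmoeb, (even_two_mul (k : ℤ)).neg.neg_one_zpow, one_mul]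

lemma slash_mul (hN : N.det ≠ 0) :
    EqOn (slash k (M * N) f) (slash k N (slash k M f)) offReal := by
  intro z hz
  have hden := moebiusDenom_ne_zero hN hz
  rw [slash_apply, slash_apply, slash_apply, moebiusDenom_mul M N hden, moebius_mul M N hden,
    mul_zpow]
  ring

lemma Set.EqOn.slash (hM : M.det ≠ 0) (h : EqOn f g offReal) :
    EqOn (slash k M f) (slash k M g) offReal := fun z hz => by
  rw [slash_apply, slash_apply, h (moebius_mem_offReal hM hz)]

end Slash

theorem sum_slash_pow_eq_zero {k p : ℕ} {U : Matrix (Fin 2) (Fin 2) ℝ} (hU : U.det ≠ 0)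
    (hUp : U ^ p = -1) {A B C : ℂ → ℂ} (hAC : EqOn (slash k U A) C offReal)
    (hCB : EqOn (slash k U C) (-B) offReal) {z : ℂ} (hz : z ∈ offReal) :
    ∑ j ∈ Finset.range p, slash k (U ^ j) (A + B) z = 0 := by
  obtain _ | n := p
  · exact absurd (congrFun (congrFun hUp 0) 0) (by norm_num)
  have hdet (j : ℕ) : (U ^ j).det ≠ 0 := by
    rw [Matrix.det_pow]
    exact pow_ne_zero j hU
  set c : ℕ → ℂ := fun j => slash k (U ^ j) C z with hc
  have hB : EqOn (slash k U B) (-slash k (U * U) C) offReal := fun w hw => by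
    rw [Pi.neg_apply, slash_mul hU hw, hCB.slash hU hw, slash_neg, Pi.neg_apply, neg_neg]
  have hABU : EqOn (slash k U (A + B)) (C - slash k (U * U) C) offReal := fun w hw => by
    rw [slash_add, Pi.add_apply, hAC hw, hB hw, Pi.neg_apply, Pi.sub_apply, sub_eq_add_neg]
  have hstep (j : ℕ) : slash k (U ^ (j + 1)) (A + B) z = c j - c (j + 2) := by
    rw [pow_succ', slash_mul (hdet j) hz, hABU.slash (hdet j) hz, slash_sub, Pi.sub_apply,
      ← slash_mul (hdet j) hz, ← pow_two, ← pow_add, add_comm 2 j]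
  have hc0 : c 0 = C z := by simp only [hc, pow_zero, slash_one]
  have hc1 : c 1 = -B z := by simp only [hc, pow_one, hCB hz, Pi.neg_apply]
  have hcn : c n = A z := by
    rw [show c n = slash k (U ^ n) C z from rfl, ← hAC.slash (hdet n) hz,
      ← slash_mul (hdet n) hz, ← pow_succ', hUp, slash_neg_one]
  have hcn1 : c (n + 1) = C z := by simp only [hc, hUp, slash_neg_one]
  have htele : ∑ j ∈ Finset.range n, (c j - c (j + 2)) = c 0 + c 1 - (c n + c (n + 1)) :=
    Finset.sum_range_sub' (fun j => c j + c (j + 1)) n ▸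
      Finset.sum_congr rfl fun j _ => by ring
  rw [Finset.sum_range_succ', Finset.sum_congr rfl fun j _ => hstep j, htele, hc0, hc1, hcn, hcn1,
    pow_zero, slash_one, Pi.add_apply]
  ring

lemma sin_smul_heckeU_pow (θ : ℝ) (j : ℕ) :
    sin θ • !![2 * cos θ, -1; 1, 0] ^ j =
      !![sin ((j + 1) * θ), -sin (j * θ); sin (j * θ), -sin ((j - 1) * θ)] := by
  induction j with
  | zero => ext i j; fin_cases i <;> fin_cases j <;> simp
  | succ j ih =>
    have h1 : sin ((j + 1 + 1) * θ) = 2 * cos θ * sin ((j + 1) * θ) - sin (j * θ) := by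
      rw [show (j + 1 + 1) * θ = (j + 1) * θ + θ by ring,
        show (j : ℝ) * θ = (j + 1) * θ - θ by ring, sin_add, sin_sub]
      ring
    have h2 : sin ((j + 1) * θ) = 2 * cos θ * sin (j * θ) - sin ((j - 1) * θ) := by
      rw [show (j + 1) * θ = j * θ + θ by ring, show (j - 1) * θ = j * θ - θ by ring,
        sin_add, sin_sub]
      ring
    rw [pow_succ, ← smul_mul_assoc, ih, Matrix.mul_fin_two]
    push_cast
    rw [h1, h2, add_sub_cancel_right]
    ext i j
    fin_cases i <;> fin_cases j <;> simp <;> ring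

lemma heckeU_pow_eq_neg_one {p : ℕ} {θ : ℝ} (hθ : p * θ = π) (hsin : sin θ ≠ 0) :
    !![2 * cos θ, -1; 1, 0] ^ p = -1 := by
  apply smul_right_injective _ hsin
  simp only
  rw [sin_smul_heckeU_pow, hθ, sin_pi, add_mul, one_mul, hθ, add_comm, sin_add_pi, sub_mul,
    one_mul, hθ, sin_pi_sub]
  ext i j
  fin_cases i <;> fin_cases j <;> simp

lemma zpow_neg_two_mul_mul_zpow_neg (k : ℕ) (z P : ℂ) :
    z ^ (-(2 * (k : ℤ))) * P ^ (-(k : ℤ)) = (z ^ 2 * P) ^ (-(k : ℤ)) := by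
  rw [mul_zpow, ← zpow_natCast z 2, ← zpow_mul]
  push_cast
  ring_nf

lemma zpow_neg_two_mul_mul_quad_neg_inv {k : ℕ} (hk : Odd k) (b : ℂ) {z : ℂ} (hz : z ≠ 0) :
    z ^ (-(2 * (k : ℤ))) * ((-1 / z) ^ 2 + b * (-1 / z) - 1) ^ (-(k : ℤ)) =
      -(z ^ 2 + b * z - 1) ^ (-(k : ℤ)) := by
  rw [zpow_neg_two_mul_mul_zpow_neg, ← (odd_neg.2 (hk.natCast (R := ℤ))).neg_zpow]
  congr 1
  field_simp
  ring

section HeckeU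

variable (k : ℕ) {l : ℝ}

lemma slash_heckeU_apply (l : ℝ) (f : ℂ → ℂ) (w : ℂ) :
    slash k !![l, -1; 1, 0] f w = w ^ (-(2 * (k : ℤ))) * f ((l * w - 1) / w) := by
  simp [slash_apply, moebius, moebiusNum, moebiusDenom, sub_eq_add_neg]

lemma slash_heckeU_quadA (hl : l ≠ 0) :
    EqOn (slash k !![l, -1; 1, 0] fun w => (w ^ 2 + (2 / (l : ℂ) - l) * w - 1) ^ (-(k : ℤ)))
      (fun w => (w ^ 2 - ((l : ℂ) + 2 / l) * w + 1) ^ (-(k : ℤ))) offReal := fun w hw => by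
  have hw0 := ne_zero_of_mem_offReal hw
  have hl0 : (l : ℂ) ≠ 0 := Complex.ofReal_ne_zero.2 hl
  rw [slash_heckeU_apply, zpow_neg_two_mul_mul_zpow_neg]
  congr 1
  field_simp
  ring

lemma slash_heckeU_quadC (hk : Odd k) (hl : l ≠ 0) :
    EqOn (slash k !![l, -1; 1, 0] fun w => (w ^ 2 - ((l : ℂ) + 2 / l) * w + 1) ^ (-(k : ℤ)))
      (-fun w => (w ^ 2 + ((l : ℂ) - 2 / l) * w - 1) ^ (-(k : ℤ))) offReal := fun w hw => by
  have hw0 := ne_zero_of_mem_offReal hw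
  have hl0 : (l : ℂ) ≠ 0 := Complex.ofReal_ne_zero.2 hl
  rw [slash_heckeU_apply, zpow_neg_two_mul_mul_zpow_neg, Pi.neg_apply,
    ← (odd_neg.2 (hk.natCast (R := ℤ))).neg_zpow]
  congr 1
  field_simp
  ring

end HeckeU

lemma two_mul_cos_pi_div_pos {p : ℕ} (hp : 2 < p) : 0 < 2 * cos (π / p) := by
  have hlt : π / p < π / 2 := div_lt_div_of_pos_left pi_pos two_pos (by exact_mod_cast hp)
  have hpos : 0 < π / p := by positivity
  linarith [cos_pos_of_mem_Ioo ⟨by linarith, hlt⟩]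

theorem stmt9_general (p : ℕ) (hp : 5 ≤ p)
    (lam : ℝ) (hlam : lam = 2 * Real.cos (Real.pi / p))
    (U : Matrix (Fin 2) (Fin 2) ℝ) (hU : U = !![lam, -1; 1, 0])
    (k : ℕ) (hkodd : Odd k)
    (q : ℂ → ℂ)
    (hq : ∀ z : ℂ, q z =
      (z ^ 2 + (2 / (lam : ℂ) - (lam : ℂ)) * z - 1) ^ (-(k : ℤ)) +
      (z ^ 2 + ((lam : ℂ) - 2 / (lam : ℂ)) * z - 1) ^ (-(k : ℤ))) :
    ∀ z : ℂ, z.im ≠ 0 →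
      q z + z ^ (-(2 * (k : ℤ))) * q (-1 / z) = 0 ∧
      ∑ j ∈ Finset.range p, slash k (U ^ j) q z = 0 := by
  intro z hz
  refine ⟨?_, ?_⟩
  · rw [hq, hq, mul_add, zpow_neg_two_mul_mul_quad_neg_inv hkodd _ (ne_zero_of_mem_offReal hz),
      zpow_neg_two_mul_mul_quad_neg_inv hkodd _ (ne_zero_of_mem_offReal hz)]
    ring
  · have hθ : (p : ℝ) * (π / p) = π := mul_div_cancel₀ _ (by positivity)
    have hlt : π / p < π := div_lt_self pi_pos (by exact_mod_cast by omega)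
    have hsin : sin (π / p) ≠ 0 := (sin_pos_of_pos_of_lt_pi (by positivity) hlt).ne'
    have hlam0 : lam ≠ 0 := hlam ▸ (two_mul_cos_pi_div_pos (by omega)).ne'
    have hUp : U ^ p = -1 := by rw [hU, hlam]; exact heckeU_pow_eq_neg_one hθ hsin
    subst hU
    rw [funext hq]
    exact sum_slash_pow_eq_zero (by simp [Matrix.det_fin_two]) hUp
      (slash_heckeU_quadA k hlam0) (slash_heckeU_quadC k hkodd hlam0) hz

/-- Fix an integer `p ≥ 5`, set `λ = 2cos(π/p)`, and let `k` be an
odd positive integer.  Define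
`q(z) = (z² + (2/λ - λ)z - 1)^{-k} + (z² + (λ - 2/λ)z - 1)^{-k}`.
Then `q` satisfies the rational period function relations of weight `2k` on the
Hecke group `G_p`: for every `z ∈ ℂ` with `Im z ≠ 0`,
`q(z) + z^{-2k}·q(-1/z) = 0` and `Σ_{j=0}^{p-1} (q ∣_{2k} U^j)(z) = 0`. -/
theorem stmt9 (p : ℕ) (hp : 5 ≤ p)
    (lam : ℝ) (hlam : lam = 2 * Real.cos (Real.pi / p))
    (U : Matrix (Fin 2) (Fin 2) ℝ) (hU : U = !![lam, -1; 1, 0])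
    (k : ℕ) (hk : 0 < k) (hkodd : Odd k)
    (q : ℂ → ℂ)
    (hq : ∀ z : ℂ, q z =
      (z ^ 2 + (2 / (lam : ℂ) - (lam : ℂ)) * z - 1) ^ (-(k : ℤ)) +
      (z ^ 2 + ((lam : ℂ) - 2 / (lam : ℂ)) * z - 1) ^ (-(k : ℤ))) :
    ∀ z : ℂ, z.im ≠ 0 →
      q z + z ^ (-(2 * (k : ℤ))) * q (-1 / z) = 0 ∧
      ∑ j ∈ Finset.range p, slash k (U ^ j) q z = 0 :=
  stmt9_general p hp lam hlam U hU k hkodd q hq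
end

section
/- Fix an integer p ≥ 5, set λ = 2cos(π/p) (so λ² - 1 > 0), and let k be any positive integer. Define q(z) = (z² - (λ²-1))^{-k} - (-1)^k·((λ²-1)·z² - 1)^{-k}. Then q satisfies the rational period function relations of weight 2k on the Hecke group G_p: for every z ∈ ℂ with Im z ≠ 0, q(z) + z^{-2k}·q(-1/z) = 0 and Σ_{j=0}^{p-1} (q |_{2k} U^j)(z) = 0. (Its poles ±√(λ²-1) and ±1/√(λ²-1) form the Hecke-symmetric union of two Hecke-conjugate irreducible systems of poles.) -/
/-!
Put `α = λ² - 1` and `Q_M(z) = (az+b)² - α(cz+d)²` for `M = ((a,b),(c,d))`. Then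
`q|M = Q_M^{-k} - Q_{TM}^{-k}`. The matrix `V = ((λ, -α), (-1, λ))` preserves the form
`X² - αY²` and `T = V U²`, so `q|U^j = Q_{U^j}^{-k} - Q_{U^{j+2}}^{-k}` and the sum over
`j < p` telescopes to `Q_1^{-k} + Q_U^{-k} - Q_{U^p}^{-k} - Q_{U^{p+1}}^{-k}`. This vanishes
because `Q_{-M} = Q_M` and `U^p = -1`; the latter holds because `sin θ · U^n` has entries
`±sin(mθ)`, which for `θ = π/p` and `n = p` give `-sin θ · 1`. The relation `q + q|T = 0` is
the same computation with `T² = -1`.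
-/

lemma denom_ne_zero_of_det_ne_zero {M : Matrix (Fin 2) (Fin 2) ℝ} (hM : M.det ≠ 0) {z : ℂ}
    (hz : z.im ≠ 0) : (M 1 0 : ℂ) * z + M 1 1 ≠ 0 := by
  intro h
  have hc : M 1 0 = 0 := by simpa [hz] using congrArg Complex.im h
  have hd : M 1 1 = 0 := by simpa [hc] using congrArg Complex.re h
  simp [Matrix.det_fin_two, hc, hd] at hM

lemma div_sq_zpow_neg (x D : ℂ) (k : ℕ) :
    (x / D ^ 2) ^ (-(k : ℤ)) = D ^ (2 * (k : ℤ)) * x ^ (-(k : ℤ)) := by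
  rw [div_zpow, zpow_neg, zpow_neg, zpow_natCast, zpow_natCast, ← pow_mul, div_inv_eq_mul,
    mul_comm, ← zpow_natCast]
  push_cast
  rfl

lemma neg_one_pow_mul_neg_zpow_neg (y : ℂ) (k : ℕ) :
    (-1) ^ k * (-y) ^ (-(k : ℤ)) = y ^ (-(k : ℤ)) := by
  rw [zpow_neg, zpow_neg, zpow_natCast, zpow_natCast, neg_pow y, mul_inv, ← mul_assoc,
    ← inv_pow, inv_neg, inv_one, ← mul_pow]
  norm_num

lemma Finset.sum_range_sub_add_two {G : Type*} [AddCommGroup G] (f : ℕ → G) (n : ℕ) :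
    ∑ j ∈ range n, (f j - f (j + 2)) = f 0 + f 1 - f n - f (n + 1) := by
  induction n with
  | zero => simp
  | succ n ih => rw [sum_range_succ, ih]; abel

lemma Real.sin_add_eq_two_mul_cos_mul_sin_sub (x θ : ℝ) :
    sin (x + θ) = 2 * cos θ * sin x - sin (x - θ) := by
  rw [sin_add, sin_sub]; ring

lemma sin_smul_pow_succ (θ : ℝ) (n : ℕ) :
    Real.sin θ • !![2 * Real.cos θ, -1; 1, 0] ^ (n + 1) =
      !![Real.sin ((n + 2) * θ), -Real.sin ((n + 1) * θ);
         Real.sin ((n + 1) * θ), -Real.sin (n * θ)] := by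
  induction n with
  | zero =>
    ext i j; fin_cases i <;> fin_cases j <;> simp [Real.sin_two_mul]; ring
  | succ n ih =>
    have h₁ := Real.sin_add_eq_two_mul_cos_mul_sin_sub ((n + 1) * θ) θ
    have h₂ := Real.sin_add_eq_two_mul_cos_mul_sin_sub ((n + 2) * θ) θ
    rw [pow_succ, ← smul_mul_assoc, ih]
    push_cast
    ext i j
    fin_cases i <;> fin_cases j <;> simp [Matrix.mul_apply] <;> ring_nf at h₁ h₂ ⊢ <;>
      linarith

lemma heckeMatrix_pow_eq_neg_one {p : ℕ} (hp : 2 ≤ p) :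
    !![2 * Real.cos (Real.pi / p), -1; 1, 0] ^ p = (-1 : Matrix (Fin 2) (Fin 2) ℝ) := by
  obtain ⟨n, rfl⟩ : ∃ n, p = n + 1 := ⟨p - 1, by omega⟩
  set θ := Real.pi / ((n + 1 : ℕ) : ℝ)
  have hnθ : ((n : ℝ) + 1) * θ = Real.pi := by
    simp only [θ]; push_cast; field_simp
  have hθ : 0 < θ ∧ θ < Real.pi := by
    refine ⟨by positivity, div_lt_self Real.pi_pos ?_⟩
    exact_mod_cast (by omega : 1 < n + 1)
  have hsin : Real.sin θ ≠ 0 := (Real.sin_pos_of_pos_of_lt_pi hθ.1 hθ.2).ne'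
  refine smul_right_injective (Matrix (Fin 2) (Fin 2) ℝ) hsin ?_
  dsimp only
  rw [sin_smul_pow_succ, show ((n : ℝ) + 2) * θ = Real.pi + θ by linarith,
    show (n : ℝ) * θ = Real.pi - θ by linarith, hnθ]
  ext i j; fin_cases i <;> fin_cases j <;> simp [Real.sin_add]

noncomputable def rpf (k : ℕ) (α z : ℂ) : ℂ :=
  (z ^ 2 - α) ^ (-(k : ℤ)) - (-1) ^ k * (α * z ^ 2 - 1) ^ (-(k : ℤ))

noncomputable def quadForm (α : ℂ) (M : Matrix (Fin 2) (Fin 2) ℝ) (z : ℂ) : ℂ :=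
  ((M 0 0 : ℂ) * z + M 0 1) ^ 2 - α * ((M 1 0 : ℂ) * z + M 1 1) ^ 2

lemma quadForm_neg (α : ℂ) (M : Matrix (Fin 2) (Fin 2) ℝ) (z : ℂ) :
    quadForm α (-M) z = quadForm α M z := by
  simp only [quadForm, Matrix.neg_apply, Complex.ofReal_neg]
  ring

lemma quadForm_V_mul (lam : ℝ) (M : Matrix (Fin 2) (Fin 2) ℝ) (z : ℂ) :
    quadForm ((lam : ℂ) ^ 2 - 1) (!![lam, -(lam ^ 2 - 1); -1, lam] * M) z =
      quadForm ((lam : ℂ) ^ 2 - 1) M z := by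
  simp only [quadForm, Matrix.mul_apply, Fin.sum_univ_two]
  simp
  ring

lemma T_eq_V_mul_U_sq (lam : ℝ) :
    !![(0 : ℝ), -1; 1, 0] = !![lam, -(lam ^ 2 - 1); -1, lam] * !![lam, -1; 1, 0] ^ 2 := by
  ext i j; fin_cases i <;> fin_cases j <;> simp [sq, Matrix.mul_apply] <;> ring

lemma slash_rpf {k : ℕ} {α z : ℂ} {M : Matrix (Fin 2) (Fin 2) ℝ}
    (hD : (M 1 0 : ℂ) * z + M 1 1 ≠ 0) :
    slash k M (rpf k α) z =
      quadForm α M z ^ (-(k : ℤ)) - quadForm α (!![0, -1; 1, 0] * M) z ^ (-(k : ℤ)) := by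
  set N : ℂ := (M 0 0 : ℂ) * z + M 0 1
  set D : ℂ := (M 1 0 : ℂ) * z + M 1 1
  have hM : quadForm α M z = N ^ 2 - α * D ^ 2 := rfl
  have hTM : quadForm α (!![0, -1; 1, 0] * M) z = D ^ 2 - α * N ^ 2 := by
    simp [quadForm, Matrix.mul_apply, N, D]
    ring
  have e₁ : (N / D) ^ 2 - α = quadForm α M z / D ^ 2 := by
    rw [hM]; field_simp
  have e₂ : α * (N / D) ^ 2 - 1 = -(quadForm α (!![0, -1; 1, 0] * M) z / D ^ 2) := by
    rw [hTM]; field_simp; ring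
  rw [slash, rpf, e₁, e₂, neg_one_pow_mul_neg_zpow_neg, div_sq_zpow_neg, div_sq_zpow_neg,
    mul_sub, ← mul_assoc, ← mul_assoc, zpow_neg_mul_zpow_self _ hD, one_mul, one_mul]

theorem stmt13_general (p : ℕ) (hp : 5 ≤ p)
    (lam : ℝ) (hlam : lam = 2 * Real.cos (Real.pi / p))
    (U : Matrix (Fin 2) (Fin 2) ℝ) (hU : U = !![lam, -1; 1, 0])
    (k : ℕ)
    (q : ℂ → ℂ)
    (hq : ∀ z : ℂ, q z =
      (z ^ 2 - ((lam : ℂ) ^ 2 - 1)) ^ (-(k : ℤ)) -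
      (-1) ^ k * (((lam : ℂ) ^ 2 - 1) * z ^ 2 - 1) ^ (-(k : ℤ))) :
    ∀ z : ℂ, z.im ≠ 0 →
      q z + z ^ (-(2 * (k : ℤ))) * q (-1 / z) = 0 ∧
      ∑ j ∈ Finset.range p, slash k (U ^ j) q z = 0 := by
  intro z hz
  obtain rfl : q = rpf k ((lam : ℂ) ^ 2 - 1) := funext hq
  set T : Matrix (Fin 2) (Fin 2) ℝ := !![0, -1; 1, 0]
  set Q : Matrix (Fin 2) (Fin 2) ℝ → ℂ := fun M =>
    quadForm ((lam : ℂ) ^ 2 - 1) M z ^ (-(k : ℤ))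
  have hslash (M : Matrix (Fin 2) (Fin 2) ℝ) (hM : M.det ≠ 0) :
      slash k M (rpf k ((lam : ℂ) ^ 2 - 1)) z = Q M - Q (T * M) :=
    slash_rpf (denom_ne_zero_of_det_ne_zero hM hz)
  have hQ_neg (M : Matrix (Fin 2) (Fin 2) ℝ) : Q (-M) = Q M := by simp only [Q, quadForm_neg]
  constructor
  · have h₁ : slash k 1 (rpf k ((lam : ℂ) ^ 2 - 1)) z = rpf k ((lam : ℂ) ^ 2 - 1) z := by
      simp [slash]
    have hT : slash k T (rpf k ((lam : ℂ) ^ 2 - 1)) z =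
        z ^ (-(2 * (k : ℤ))) * rpf k ((lam : ℂ) ^ 2 - 1) (-1 / z) := by
      simp [slash, T]
    have hTT : T * T = -1 := by
      ext i j; fin_cases i <;> fin_cases j <;> simp [T]
    rw [← h₁, ← hT, hslash 1 (by simp), hslash T (by simp [T]), mul_one, hTT, hQ_neg]
    ring
  · have hstep (j : ℕ) :
        slash k (U ^ j) (rpf k ((lam : ℂ) ^ 2 - 1)) z = Q (U ^ j) - Q (U ^ (j + 2)) := by
      rw [hslash _ (by simp [hU, Matrix.det_fin_two]), show T = _ from T_eq_V_mul_U_sq lam,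
        ← hU, mul_assoc, ← pow_add, add_comm 2]
      simp only [Q, quadForm_V_mul]
    have hUp : U ^ p = -1 := hU ▸ hlam ▸ heckeMatrix_pow_eq_neg_one (by omega)
    rw [Finset.sum_congr rfl fun j _ => hstep j, Finset.sum_range_sub_add_two, pow_succ U p,
      hUp, neg_one_mul, hQ_neg, hQ_neg, pow_zero, pow_one]
    ring

/-- Fix an integer `p ≥ 5`, set `λ = 2cos(π/p)` (so `λ² - 1 > 0`),
and let `k` be any positive integer.  Define
`q(z) = (z² - (λ²-1))^{-k} - (-1)^k·((λ²-1)·z² - 1)^{-k}`.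
Then `q` satisfies the rational period function relations of weight `2k` on the
Hecke group `G_p`: for every `z ∈ ℂ` with `Im z ≠ 0`,
`q(z) + z^{-2k}·q(-1/z) = 0` and `Σ_{j=0}^{p-1} (q ∣_{2k} U^j)(z) = 0`. -/
theorem stmt13 (p : ℕ) (hp : 5 ≤ p)
    (lam : ℝ) (hlam : lam = 2 * Real.cos (Real.pi / p))
    (hlam1 : lam ^ 2 - 1 > 0)
    (U : Matrix (Fin 2) (Fin 2) ℝ) (hU : U = !![lam, -1; 1, 0])
    (k : ℕ) (hk : 0 < k)
    (q : ℂ → ℂ)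
    (hq : ∀ z : ℂ, q z =
      (z ^ 2 - ((lam : ℂ) ^ 2 - 1)) ^ (-(k : ℤ)) -
      (-1) ^ k * (((lam : ℂ) ^ 2 - 1) * z ^ 2 - 1) ^ (-(k : ℤ))) :
    ∀ z : ℂ, z.im ≠ 0 →
      q z + z ^ (-(2 * (k : ℤ))) * q (-1 / z) = 0 ∧
      ∑ j ∈ Finset.range p, slash k (U ^ j) q z = 0 :=
  stmt13_general p hp lam hlam U hU k q hq
end
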